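/- Let N ≥ 3 be an integer and L > 0. The following are equivalent: (i) there exist λ ∈ ℂ and functions φ₁, …, φ_N : ℝ → ℂ, not all identically zero on [0,L], each satisfying the KdV spectral ODE with parameter λ on [0,L], with the boundary conditions φ_j(0) = φ₁(0) for all j, Σ_{j=1}^N φ_j''(0) = 0, φ_j(L) = 0 and φ_j'(0) = 0 for all j, φ_j'(L) = 0 for j = 1,…,N−1, and φ_N''(L) = 0; (ii) L belongs to the critical set 𝒩. -/

import Mathlib

/-- A function `φ : ℝ → ℂ` satisfies the KdV spectral ODE with parameter `lam` on `[0, L]`: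
it is three times continuously differentiable and `lam·φ + φ' + φ''' = 0` on `[0, L]`. -/
def KdVSpectralODE (lam : ℂ) (L : ℝ) (φ : ℝ → ℂ) : Prop :=
  ContDiff ℝ 3 φ ∧
    ∀ x ∈ Set.Icc (0 : ℝ) L, lam * φ x + deriv φ x + iteratedDeriv 3 φ x = 0

/-- The critical set 𝒩 of Rosier. -/
def criticalN : Set ℝ :=
  {L : ℝ | ∃ k l : ℕ, 0 < k ∧ 0 < l ∧
    L = (2 * Real.pi / Real.sqrt 3) * Real.sqrt ((k : ℝ) ^ 2 + (k : ℝ) * l + (l : ℝ) ^ 2)}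

/-!
Every solution of `λφ + φ' + φ''' = 0` is determined on `[0, L]` by its 2-jet `(φ, φ', φ'')` at
either endpoint, and is an exponential sum over the roots of `μ³ + μ + λ`.

Rosier's lemma: a Rosier mode, i.e. a nontrivial solution with `φ(0) = φ'(0) = φ(L) = φ'(L) = 0`,
exists iff `L ∈ 𝒩`.
For simple roots `μᵢ` these four conditions force `e^{μ₁L} = e^{μ₂L} = e^{μ₃L}`, i.e.
`(μᵢ - μⱼ)L ∈ 2πiℤ`, and `∑ μᵢ = 0`, `∑ μᵢμⱼ = 1` turn this into `3L² = 4π²(k² + kl + l²)`;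
a double root admits no such solution.

For the network problem, if two of `φ₁, …, φ_{N-1}` have different 2-jets at `0`, their
difference is a Rosier mode. Otherwise they all equal some `ψ`, and `ψ(0) = 0`. Indeed, if
`ψ''(0) = 0` then `φ_N` has the same 2-jet at `0` as `ψ`, so `ψ` has zero 2-jet at `L`. If
`ψ''(0) ≠ 0`, then `D = ψ - φ_N` has `D(0) = D'(0) = D(L) = 0 ≠ D''(0)`; for simple roots this
makes `e^{μᵢL}` affine in `μᵢ`, and then `ψ(L) = ψ'(L) = 0` forces `ψ(0) = 0` (a double root is a
direct computation). So `ψ` is a Rosier mode unless everything vanishes. Conversely a Rosier mode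
`G` yields `(G, -G, 0, …, 0)`.
-/

open Complex Set

noncomputable section

variable {lam : ℂ} {L : ℝ} {f g ψ D : ℝ → ℂ} {c₁ c₂ c₃ μ₁ μ₂ μ₃ m : ℂ}

lemma ContDiff.hasDerivAt_iteratedDeriv {𝕜 F : Type*} [NontriviallyNormedField 𝕜]
    [NormedAddCommGroup F] [NormedSpace 𝕜 F] {f : 𝕜 → F} {n : ℕ} (hf : ContDiff 𝕜 n f) {k : ℕ}
    (hk : k < n) (t : 𝕜) : HasDerivAt (iteratedDeriv k f) (iteratedDeriv (k + 1) f t) t := by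
  rw [iteratedDeriv_succ]
  exact (hf.differentiable_iteratedDeriv k (by exact_mod_cast hk) t).hasDerivAt

lemma eqOn_deriv_zero_of_eqOn_zero {F : Type*} [NormedAddCommGroup F] [NormedSpace ℝ F]
    {u : ℝ → F} {a b : ℝ} (hab : a < b) (hu : Differentiable ℝ u) (h : EqOn u 0 (Icc a b)) :
    EqOn (deriv u) 0 (Icc a b) := fun x hx =>
  (uniqueDiffOn_Icc hab x hx).eq_deriv _ (hu x).hasDerivAt.hasDerivWithinAt
    ((hasDerivWithinAt_const x _ 0).congr (fun _ hy => h hy) (h hx))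

lemma Fintype.sum_eq_card_sub_one_nsmul_add {ι M : Type*} [Fintype ι] [DecidableEq ι]
    [AddCommMonoid M] (i : ι) {g : ι → M} {b : M} (h : ∀ j, j ≠ i → g j = b) :
    ∑ j, g j = (Fintype.card ι - 1) • b + g i := by
  rw [← Finset.add_sum_erase _ _ (Finset.mem_univ i),
    Finset.sum_congr rfl fun j hj => h j (Finset.ne_of_mem_erase hj), Finset.sum_const,
    Finset.card_erase_of_mem (Finset.mem_univ _), Finset.card_univ, add_comm]

open Polynomial in
lemma exists_vieta_cubic (lam : ℂ) :
    ∃ μ₁ μ₂ μ₃ : ℂ, μ₁ + μ₂ + μ₃ = 0 ∧ μ₁ * μ₂ + μ₁ * μ₃ + μ₂ * μ₃ = 1 ∧ μ₁ * μ₂ * μ₃ = -lam := by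
  have hdeg : (X ^ 3 + X + C lam).degree = 3 := by compute_degree!
  obtain ⟨μ₁, hμ₁⟩ := IsAlgClosed.exists_root (X ^ 3 + X + C lam) (by rw [hdeg]; decide)
  simp only [IsRoot, eval_add, eval_pow, eval_X, eval_C] at hμ₁
  obtain ⟨μ₂, hμ₂⟩ := exists_quadratic_eq_zero one_ne_zero
    (IsAlgClosed.exists_eq_mul_self (discrim 1 μ₁ (1 + μ₁ ^ 2)))
  exact ⟨μ₁, μ₂, -μ₁ - μ₂, by ring, by linear_combination -hμ₂,
    by linear_combination -μ₁ * hμ₂ + hμ₁⟩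

lemma cubic_roots_of_vieta (hs : μ₁ + μ₂ + μ₃ = 0) (he : μ₁ * μ₂ + μ₁ * μ₃ + μ₂ * μ₃ = 1)
    (hp : μ₁ * μ₂ * μ₃ = -lam) :
    μ₁ ^ 3 + μ₁ + lam = 0 ∧ μ₂ ^ 3 + μ₂ + lam = 0 ∧ μ₃ ^ 3 + μ₃ + lam = 0 :=
  ⟨by linear_combination hp - μ₁ * he + μ₁ ^ 2 * hs,
    by linear_combination hp - μ₂ * he + μ₂ ^ 2 * hs,
    by linear_combination hp - μ₃ * he + μ₃ ^ 2 * hs⟩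

lemma exists_distinct_vieta_or_double (lam : ℂ) :
    (∃ μ₁ μ₂ μ₃ : ℂ, μ₁ + μ₂ + μ₃ = 0 ∧ μ₁ * μ₂ + μ₁ * μ₃ + μ₂ * μ₃ = 1 ∧
      μ₁ * μ₂ * μ₃ = -lam ∧ μ₁ ≠ μ₂ ∧ μ₁ ≠ μ₃ ∧ μ₂ ≠ μ₃) ∨
    ∃ m : ℂ, 3 * m ^ 2 + 1 = 0 ∧ lam = 2 * m ^ 3 := by
  obtain ⟨μ₁, μ₂, μ₃, hs, he, hp⟩ := exists_vieta_cubic lam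
  by_cases h₁₂ : μ₁ = μ₂
  · subst h₁₂
    exact .inr ⟨μ₁, by linear_combination -he + 2 * μ₁ * hs, by linear_combination hp - μ₁ ^ 2 * hs⟩
  by_cases h₁₃ : μ₁ = μ₃
  · subst h₁₃
    exact .inr ⟨μ₁, by linear_combination -he + 2 * μ₁ * hs, by linear_combination hp - μ₁ ^ 2 * hs⟩
  by_cases h₂₃ : μ₂ = μ₃
  · subst h₂₃
    exact .inr ⟨μ₂, by linear_combination -he + 2 * μ₂ * hs, by linear_combination hp - μ₂ ^ 2 * hs⟩
  exact .inl ⟨μ₁, μ₂, μ₃, hs, he, hp, h₁₂, h₁₃, h₂₃⟩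

lemma hasDerivAt_cexp_mul_ofReal (μ : ℂ) (x : ℝ) :
    HasDerivAt (fun y : ℝ => cexp (μ * y)) (μ * cexp (μ * x)) x := by
  simpa [mul_comm] using ((hasDerivAt_id (x : ℂ)).const_mul μ).cexp.comp_ofReal

lemma hasDerivAt_ofReal_mul_cexp_mul_ofReal (μ : ℂ) (x : ℝ) :
    HasDerivAt (fun y : ℝ => (y : ℂ) * cexp (μ * y))
      (cexp (μ * x) + μ * ((x : ℂ) * cexp (μ * x))) x :=
  (ofRealCLM.hasDerivAt.mul (hasDerivAt_cexp_mul_ofReal μ x)).congr_deriv <| by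
    simp only [ofRealCLM_apply, ofReal_one]; ring

/-- Solutions of `λφ + φ' + φ''' = 0` when `μ³ + μ + λ` has three simple roots `μᵢ`. -/
def expSum3 (c₁ c₂ c₃ μ₁ μ₂ μ₃ : ℂ) (x : ℝ) : ℂ :=
  c₁ * cexp (μ₁ * x) + c₂ * cexp (μ₂ * x) + c₃ * cexp (μ₃ * x)

/-- Solutions of `λφ + φ' + φ''' = 0` when `μ³ + μ + λ` has the double root `m` (and the simple
root `-2m`). -/
def expSumDouble (c₁ c₂ c₃ m : ℂ) (x : ℝ) : ℂ :=
  c₁ * cexp (m * x) + c₂ * ((x : ℂ) * cexp (m * x)) + c₃ * cexp (-2 * m * x)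

lemma contDiff_expSum3 : ContDiff ℝ 3 (expSum3 c₁ c₂ c₃ μ₁ μ₂ μ₃) := by
  have : ContDiff ℝ 3 (fun x : ℝ => (x : ℂ)) := ofRealCLM.contDiff
  unfold expSum3; fun_prop

lemma contDiff_expSumDouble : ContDiff ℝ 3 (expSumDouble c₁ c₂ c₃ m) := by
  have : ContDiff ℝ 3 (fun x : ℝ => (x : ℂ)) := ofRealCLM.contDiff
  unfold expSumDouble; fun_prop

lemma deriv_expSum3 :
    deriv (expSum3 c₁ c₂ c₃ μ₁ μ₂ μ₃) = expSum3 (c₁ * μ₁) (c₂ * μ₂) (c₃ * μ₃) μ₁ μ₂ μ₃ := by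
  ext x
  exact ((((hasDerivAt_cexp_mul_ofReal μ₁ x).const_mul c₁).add
    ((hasDerivAt_cexp_mul_ofReal μ₂ x).const_mul c₂)).add
    ((hasDerivAt_cexp_mul_ofReal μ₃ x).const_mul c₃)).deriv.trans (by simp only [expSum3]; ring)

lemma deriv_expSumDouble :
    deriv (expSumDouble c₁ c₂ c₃ m) = expSumDouble (c₁ * m + c₂) (c₂ * m) (c₃ * (-2 * m)) m := by
  ext x
  exact ((((hasDerivAt_cexp_mul_ofReal m x).const_mul c₁).add
    ((hasDerivAt_ofReal_mul_cexp_mul_ofReal m x).const_mul c₂)).add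
    ((hasDerivAt_cexp_mul_ofReal (-2 * m) x).const_mul c₃)).deriv.trans
    (by simp only [expSumDouble]; ring)

lemma iteratedDeriv_two_expSum3 : iteratedDeriv 2 (expSum3 c₁ c₂ c₃ μ₁ μ₂ μ₃) =
    expSum3 (c₁ * μ₁ ^ 2) (c₂ * μ₂ ^ 2) (c₃ * μ₃ ^ 2) μ₁ μ₂ μ₃ := by
  simp only [iteratedDeriv_succ, iteratedDeriv_zero, deriv_expSum3, mul_assoc, ← sq]

lemma iteratedDeriv_two_expSumDouble : iteratedDeriv 2 (expSumDouble c₁ c₂ c₃ m) =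
    expSumDouble (c₁ * m ^ 2 + 2 * c₂ * m) (c₂ * m ^ 2) (c₃ * (4 * m ^ 2)) m := by
  simp only [iteratedDeriv_succ, iteratedDeriv_zero, deriv_expSumDouble]
  congr 1 <;> ring

lemma iteratedDeriv_three_expSum3 : iteratedDeriv 3 (expSum3 c₁ c₂ c₃ μ₁ μ₂ μ₃) =
    expSum3 (c₁ * μ₁ ^ 3) (c₂ * μ₂ ^ 3) (c₃ * μ₃ ^ 3) μ₁ μ₂ μ₃ := by
  rw [iteratedDeriv_succ, iteratedDeriv_two_expSum3, deriv_expSum3]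
  congr 1 <;> ring

lemma iteratedDeriv_three_expSumDouble : iteratedDeriv 3 (expSumDouble c₁ c₂ c₃ m) =
    expSumDouble (c₁ * m ^ 3 + 3 * c₂ * m ^ 2) (c₂ * m ^ 3) (c₃ * (-8 * m ^ 3)) m := by
  rw [iteratedDeriv_succ, iteratedDeriv_two_expSumDouble, deriv_expSumDouble]
  congr 1 <;> ring

@[simp] lemma expSum3_zero : expSum3 c₁ c₂ c₃ μ₁ μ₂ μ₃ 0 = c₁ + c₂ + c₃ := by simp [expSum3]

@[simp] lemma expSumDouble_zero : expSumDouble c₁ c₂ c₃ m 0 = c₁ + c₃ := by simp [expSumDouble]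

/-- The companion matrix of `λφ + φ' + φ''' = 0`, acting on `(φ, φ', φ'')`. -/
def companion (lam : ℂ) : ℂ × ℂ × ℂ →L[ℂ] ℂ × ℂ × ℂ :=
  let p₁ := ContinuousLinearMap.fst ℂ ℂ (ℂ × ℂ)
  let p₂ := (ContinuousLinearMap.fst ℂ ℂ ℂ).comp (ContinuousLinearMap.snd ℂ ℂ (ℂ × ℂ))
  let p₃ := (ContinuousLinearMap.snd ℂ ℂ ℂ).comp (ContinuousLinearMap.snd ℂ ℂ (ℂ × ℂ))
  p₂.prod (p₃.prod (-lam • p₁ - p₂))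

@[simp] lemma companion_apply (lam : ℂ) (p : ℂ × ℂ × ℂ) :
    companion lam p = (p.2.1, p.2.2, -lam * p.1 - p.2.1) := rfl

def jet2 (f : ℝ → ℂ) (t : ℝ) : ℂ × ℂ × ℂ := (f t, deriv f t, iteratedDeriv 2 f t)

lemma kdvSpectralODE_zero : KdVSpectralODE lam L 0 :=
  ⟨contDiff_const, fun _ _ => by simp⟩

@[simp] lemma jet2_zero (t : ℝ) : jet2 0 t = 0 := by
  simp [jet2]

namespace KdVSpectralODE

lemma hasDerivAt_jet2 (hf : KdVSpectralODE lam L f) {t : ℝ} (ht : t ∈ Icc 0 L) :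
    HasDerivAt (jet2 f) (companion lam (jet2 f t)) t := by
  have h₀ := hf.1.hasDerivAt_iteratedDeriv (k := 0) (by norm_num) t
  have h₁ := hf.1.hasDerivAt_iteratedDeriv (k := 1) (by norm_num) t
  have h₂ := hf.1.hasDerivAt_iteratedDeriv (k := 2) (by norm_num) t
  simp only [iteratedDeriv_zero, iteratedDeriv_one, zero_add, Nat.reduceAdd] at h₀ h₁ h₂
  refine (h₀.prodMk (h₁.prodMk h₂)).congr_deriv ?_
  simp only [jet2, companion_apply, Prod.mk.injEq, true_and]
  linear_combination hf.2 t ht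

lemma continuousOn_jet2 (hf : KdVSpectralODE lam L f) : ContinuousOn (jet2 f) (Icc 0 L) :=
  fun _ ht => (hf.hasDerivAt_jet2 ht).continuousAt.continuousWithinAt

lemma jet2_eqOn_of_eq_left (hf : KdVSpectralODE lam L f) (hg : KdVSpectralODE lam L g)
    (h : jet2 f 0 = jet2 g 0) : EqOn (jet2 f) (jet2 g) (Icc 0 L) :=
  ODE_solution_unique (fun _ => (companion lam).lipschitz) hf.continuousOn_jet2
    (fun _ ht => (hf.hasDerivAt_jet2 (Ico_subset_Icc_self ht)).hasDerivWithinAt)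
    hg.continuousOn_jet2
    (fun _ ht => (hg.hasDerivAt_jet2 (Ico_subset_Icc_self ht)).hasDerivWithinAt) h

lemma jet2_eqOn_of_eq_right (hf : KdVSpectralODE lam L f) (hg : KdVSpectralODE lam L g)
    (h : jet2 f L = jet2 g L) : EqOn (jet2 f) (jet2 g) (Icc 0 L) :=
  ODE_solution_unique_of_mem_Icc_left (s := fun _ => univ)
    (fun _ _ => (companion lam).lipschitz.lipschitzOnWith) hf.continuousOn_jet2
    (fun _ ht => (hf.hasDerivAt_jet2 (Ioc_subset_Icc_self ht)).hasDerivWithinAt)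
    (fun _ _ => trivial) hg.continuousOn_jet2
    (fun _ ht => (hg.hasDerivAt_jet2 (Ioc_subset_Icc_self ht)).hasDerivWithinAt)
    (fun _ _ => trivial) h

lemma sub (hf : KdVSpectralODE lam L f) (hg : KdVSpectralODE lam L g) :
    KdVSpectralODE lam L (f - g) := by
  refine ⟨hf.1.sub hg.1, fun x hx => ?_⟩
  rw [deriv_sub (hf.1.differentiable (by norm_num) x) (hg.1.differentiable (by norm_num) x),
    iteratedDeriv_sub hf.1.contDiffAt hg.1.contDiffAt, Pi.sub_apply]
  linear_combination hf.2 x hx - hg.2 x hx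

lemma const_smul (c : ℂ) (hf : KdVSpectralODE lam L f) : KdVSpectralODE lam L (c • f) := by
  refine ⟨hf.1.const_smul c, fun x hx => ?_⟩
  rw [deriv_const_smul_field, iteratedDeriv_const_smul_field]
  simp only [Pi.smul_apply, smul_eq_mul]
  linear_combination c * hf.2 x hx

lemma jet2_sub (hf : KdVSpectralODE lam L f) (hg : KdVSpectralODE lam L g) (t : ℝ) :
    jet2 (f - g) t = jet2 f t - jet2 g t := by
  rw [jet2, jet2, jet2, iteratedDeriv_sub (hf.1.of_le (by norm_num)).contDiffAt
    (hg.1.of_le (by norm_num)).contDiffAt,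
    deriv_sub (hf.1.differentiable (by norm_num) t) (hg.1.differentiable (by norm_num) t)]
  rfl

lemma eqOn_zero_of_jet2_eq_zero (hf : KdVSpectralODE lam L f) (h : jet2 f 0 = 0) :
    EqOn f 0 (Icc 0 L) := fun _ ht =>
  congrArg Prod.fst (hf.jet2_eqOn_of_eq_left kdvSpectralODE_zero (by simpa using h) ht)

lemma jet2_eq_zero_of_eqOn_zero (hL : 0 < L) (hf : KdVSpectralODE lam L f)
    (h : EqOn f 0 (Icc 0 L)) : jet2 f 0 = 0 := by
  have h₁ := eqOn_deriv_zero_of_eqOn_zero hL (hf.1.differentiable (by norm_num)) h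
  have h₂ := eqOn_deriv_zero_of_eqOn_zero hL
    (by simpa using hf.1.differentiable_iteratedDeriv 1 (by norm_num)) h₁
  have h0 : (0 : ℝ) ∈ Icc 0 L := left_mem_Icc.2 hL.le
  simp [jet2, iteratedDeriv_succ, h h0, h₁ h0, h₂ h0]

end KdVSpectralODE

lemma kdvSpectralODE_expSum3 (h₁ : μ₁ ^ 3 + μ₁ + lam = 0) (h₂ : μ₂ ^ 3 + μ₂ + lam = 0)
    (h₃ : μ₃ ^ 3 + μ₃ + lam = 0) : KdVSpectralODE lam L (expSum3 c₁ c₂ c₃ μ₁ μ₂ μ₃) := by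
  refine ⟨contDiff_expSum3, fun x _ => ?_⟩
  rw [deriv_expSum3, iteratedDeriv_three_expSum3]
  simp only [expSum3]
  linear_combination c₁ * cexp (μ₁ * x) * h₁ + c₂ * cexp (μ₂ * x) * h₂ + c₃ * cexp (μ₃ * x) * h₃

lemma kdvSpectralODE_expSumDouble (hm : 3 * m ^ 2 + 1 = 0) (hlam : lam = 2 * m ^ 3) :
    KdVSpectralODE lam L (expSumDouble c₁ c₂ c₃ m) := by
  refine ⟨contDiff_expSumDouble, fun x _ => ?_⟩
  rw [deriv_expSumDouble, iteratedDeriv_three_expSumDouble]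
  simp only [expSumDouble]
  linear_combination (c₁ * cexp (m * x) + c₂ * (x * cexp (m * x)) + c₃ * cexp (-2 * m * x)) * hlam
    + (m * (c₁ * cexp (m * x) + c₂ * (x * cexp (m * x))) + c₂ * cexp (m * x)
      - 2 * m * c₃ * cexp (-2 * m * x)) * hm

lemma jet2_expSum3 (t : ℝ) : jet2 (expSum3 c₁ c₂ c₃ μ₁ μ₂ μ₃) t =
    (expSum3 c₁ c₂ c₃ μ₁ μ₂ μ₃ t, expSum3 (c₁ * μ₁) (c₂ * μ₂) (c₃ * μ₃) μ₁ μ₂ μ₃ t,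
      expSum3 (c₁ * μ₁ ^ 2) (c₂ * μ₂ ^ 2) (c₃ * μ₃ ^ 2) μ₁ μ₂ μ₃ t) := by
  rw [jet2, deriv_expSum3, iteratedDeriv_two_expSum3]

lemma jet2_expSumDouble (t : ℝ) : jet2 (expSumDouble c₁ c₂ c₃ m) t =
    (expSumDouble c₁ c₂ c₃ m t, expSumDouble (c₁ * m + c₂) (c₂ * m) (c₃ * (-2 * m)) m t,
      expSumDouble (c₁ * m ^ 2 + 2 * c₂ * m) (c₂ * m ^ 2) (c₃ * (4 * m ^ 2)) m t) := by
  rw [jet2, deriv_expSumDouble, iteratedDeriv_two_expSumDouble]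

lemma exists_jet2_expSum3_eq (h₁₂ : μ₁ ≠ μ₂) (h₁₃ : μ₁ ≠ μ₃) (h₂₃ : μ₂ ≠ μ₃) (a b c : ℂ) :
    ∃ c₁ c₂ c₃ : ℂ, jet2 (expSum3 c₁ c₂ c₃ μ₁ μ₂ μ₃) 0 = (a, b, c) := by
  have := sub_ne_zero.2 h₁₂; have := sub_ne_zero.2 h₁₃; have := sub_ne_zero.2 h₂₃
  refine ⟨(c - b * (μ₂ + μ₃) + a * μ₂ * μ₃) / ((μ₁ - μ₂) * (μ₁ - μ₃)),
    (c - b * (μ₁ + μ₃) + a * μ₁ * μ₃) / ((μ₂ - μ₁) * (μ₂ - μ₃)),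
    (c - b * (μ₁ + μ₂) + a * μ₁ * μ₂) / ((μ₃ - μ₁) * (μ₃ - μ₂)), ?_⟩
  simp only [jet2_expSum3, expSum3_zero, Prod.mk.injEq]
  refine ⟨?_, ?_, ?_⟩ <;> field_simp <;> ring

lemma exists_jet2_expSumDouble_eq (hm : m ≠ 0) (a b c : ℂ) :
    ∃ c₁ c₂ c₃ : ℂ, jet2 (expSumDouble c₁ c₂ c₃ m) 0 = (a, b, c) := by
  refine ⟨a - (c - 2 * m * b + m ^ 2 * a) / (9 * m ^ 2),
    b - m * a + 3 * m * ((c - 2 * m * b + m ^ 2 * a) / (9 * m ^ 2)),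
    (c - 2 * m * b + m ^ 2 * a) / (9 * m ^ 2), ?_⟩
  simp only [jet2_expSumDouble, expSumDouble_zero, Prod.mk.injEq]
  refine ⟨?_, ?_, ?_⟩ <;> field_simp <;> ring

lemma KdVSpectralODE.exists_jet2_eqOn_expSum3 (hf : KdVSpectralODE lam L f)
    (h₁ : μ₁ ^ 3 + μ₁ + lam = 0) (h₂ : μ₂ ^ 3 + μ₂ + lam = 0) (h₃ : μ₃ ^ 3 + μ₃ + lam = 0)
    (h₁₂ : μ₁ ≠ μ₂) (h₁₃ : μ₁ ≠ μ₃) (h₂₃ : μ₂ ≠ μ₃) :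
    ∃ c₁ c₂ c₃ : ℂ, EqOn (jet2 f) (jet2 (expSum3 c₁ c₂ c₃ μ₁ μ₂ μ₃)) (Icc 0 L) := by
  obtain ⟨c₁, c₂, c₃, hc⟩ := exists_jet2_expSum3_eq h₁₂ h₁₃ h₂₃ (f 0) (deriv f 0)
    (iteratedDeriv 2 f 0)
  exact ⟨c₁, c₂, c₃, hf.jet2_eqOn_of_eq_left (kdvSpectralODE_expSum3 h₁ h₂ h₃) hc.symm⟩

lemma KdVSpectralODE.exists_jet2_eqOn_expSumDouble (hf : KdVSpectralODE lam L f)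
    (hm : 3 * m ^ 2 + 1 = 0) (hlam : lam = 2 * m ^ 3) :
    ∃ c₁ c₂ c₃ : ℂ, EqOn (jet2 f) (jet2 (expSumDouble c₁ c₂ c₃ m)) (Icc 0 L) := by
  have hm₀ : m ≠ 0 := by rintro rfl; norm_num at hm
  obtain ⟨c₁, c₂, c₃, hc⟩ := exists_jet2_expSumDouble_eq hm₀ (f 0) (deriv f 0) (iteratedDeriv 2 f 0)
  exact ⟨c₁, c₂, c₃, hf.jet2_eqOn_of_eq_left (kdvSpectralODE_expSumDouble hm hlam) hc.symm⟩

lemma mem_criticalN_iff_sq (hL : 0 < L) : L ∈ criticalN ↔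
    ∃ k l : ℕ, 0 < k ∧ 0 < l ∧ 3 * L ^ 2 = 4 * Real.pi ^ 2 * (k ^ 2 + k * l + l ^ 2) := by
  refine exists₂_congr fun k l => and_congr_right' <| and_congr_right' ?_
  have hQ : (0 : ℝ) ≤ k ^ 2 + k * l + l ^ 2 := by positivity
  rw [← sq_eq_sq₀ hL.le (by positivity), mul_pow, div_pow, Real.sq_sqrt hQ,
    Real.sq_sqrt zero_le_three]
  constructor <;> intro h
  · linear_combination 3 * h
  · linear_combination h / 3

lemma exists_pos_sq_add_mul_add_sq_eq {k l : ℤ} (hk : k ≠ 0) (hl : l ≠ 0) (hkl : k + l ≠ 0) :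
    ∃ p q : ℕ, 0 < p ∧ 0 < q ∧ (p : ℤ) ^ 2 + p * q + q ^ 2 = k ^ 2 + k * l + l ^ 2 := by
  suffices ∃ a b : ℤ, 0 < a ∧ 0 < b ∧ a ^ 2 + a * b + b ^ 2 = k ^ 2 + k * l + l ^ 2 by
    obtain ⟨a, b, ha, hb, hab⟩ := this
    exact ⟨a.toNat, b.toNat, by omega, by omega, by rwa [Int.toNat_of_nonneg ha.le,
      Int.toNat_of_nonneg hb.le]⟩
  rcases hk.lt_or_gt with hk | hk <;> rcases hl.lt_or_gt with hl | hl <;>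
    rcases hkl.lt_or_gt with hkl | hkl
  · exact ⟨-k, -l, by omega, by omega, by ring⟩
  · omega
  · exact ⟨-k - l, l, by omega, by omega, by ring⟩
  · exact ⟨k + l, -k, by omega, by omega, by ring⟩
  · exact ⟨-k - l, k, by omega, by omega, by ring⟩
  · exact ⟨k + l, -l, by omega, by omega, by ring⟩
  · omega
  · exact ⟨k, l, by omega, by omega, by ring⟩

lemma mem_criticalN_of_cexp_eq (hL : 0 < L) (hs : μ₁ + μ₂ + μ₃ = 0)
    (he : μ₁ * μ₂ + μ₁ * μ₃ + μ₂ * μ₃ = 1) (h₁₂ : μ₁ ≠ μ₂) (h₁₃ : μ₁ ≠ μ₃) (h₂₃ : μ₂ ≠ μ₃)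
    (hE₁₂ : cexp (μ₁ * L) = cexp (μ₂ * L)) (hE₂₃ : cexp (μ₂ * L) = cexp (μ₃ * L)) :
    L ∈ criticalN := by
  obtain ⟨k, hk⟩ := exp_eq_exp_iff_exists_int.1 hE₁₂
  obtain ⟨l, hl⟩ := exp_eq_exp_iff_exists_int.1 hE₂₃
  have hL₀ : (L : ℂ) ≠ 0 := ofReal_ne_zero.2 hL.ne'
  have ne_of_int {μ μ' : ℂ} {n : ℤ} (hne : μ ≠ μ') (h : μ * L = μ' * L + n * (2 * Real.pi * I)) :
      n ≠ 0 := by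
    rintro rfl
    exact hne (mul_right_cancel₀ hL₀ (by simpa using h))
  have hkl : k + l ≠ 0 := ne_of_int h₁₃ (by push_cast; linear_combination hk + hl)
  obtain ⟨p, q, hp, hq, hpq⟩ := exists_pos_sq_add_mul_add_sq_eq (ne_of_int h₁₂ hk)
    (ne_of_int h₂₃ hl) hkl
  refine (mem_criticalN_iff_sq hL).2 ⟨p, q, hp, hq, ?_⟩
  -- `∑_{i<j} (μᵢ - μⱼ)² = 2(∑ μᵢ)² - 6 ∑_{i<j} μᵢμⱼ = -6`, and `(μᵢ - μⱼ)L ∈ 2πi·{k, l, k + l}`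
  have hC : (3 * L ^ 2 : ℂ) = 4 * Real.pi ^ 2 * (k ^ 2 + k * l + l ^ 2) := by
    linear_combination (-(1 : ℂ) / 2) * ((μ₁ - μ₂) * L + k * (2 * Real.pi * I)) * hk
      - 1 / 2 * ((μ₂ - μ₃) * L + l * (2 * Real.pi * I)) * hl
      - 1 / 2 * ((μ₁ - μ₃) * L + (k + l) * (2 * Real.pi * I)) * (hk + hl)
      + L ^ 2 * (μ₁ + μ₂ + μ₃) * hs - 3 * L ^ 2 * he
      - 4 * Real.pi ^ 2 * (k ^ 2 + k * l + l ^ 2) * I_sq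
  have hR : 3 * L ^ 2 = 4 * Real.pi ^ 2 * ((k : ℝ) ^ 2 + k * l + l ^ 2) := by exact_mod_cast hC
  have hZ : ((p : ℤ) : ℝ) ^ 2 + (p : ℤ) * (q : ℤ) + ((q : ℤ) : ℝ) ^ 2 =
      (k : ℝ) ^ 2 + k * l + l ^ 2 := by
    exact_mod_cast hpq
  push_cast at hZ
  rw [hZ, hR]

/-- Nontriviality on `[0, L]` is encoded as `φ''(0) ≠ 0`, which is equivalent given
`φ(0) = φ'(0) = 0`. -/
structure IsRosierMode (lam : ℂ) (L : ℝ) (f : ℝ → ℂ) : Prop where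
  kdv : KdVSpectralODE lam L f
  apply_zero : f 0 = 0
  deriv_zero : deriv f 0 = 0
  iteratedDeriv_two_zero_ne : iteratedDeriv 2 f 0 ≠ 0
  apply_right : f L = 0
  deriv_right : deriv f L = 0

lemma exists_affine_of_orthogonal {d₁ d₂ d₃ E₁ E₂ E₃ : ℂ} (h₁₂ : μ₁ ≠ μ₂)
    (hd₀ : d₁ + d₂ + d₃ = 0) (hd₁ : d₁ * μ₁ + d₂ * μ₂ + d₃ * μ₃ = 0)
    (hd₂ : d₁ * μ₁ ^ 2 + d₂ * μ₂ ^ 2 + d₃ * μ₃ ^ 2 ≠ 0) (hE : d₁ * E₁ + d₂ * E₂ + d₃ * E₃ = 0) :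
    ∃ α β : ℂ, E₁ = α + β * μ₁ ∧ E₂ = α + β * μ₂ ∧ E₃ = α + β * μ₃ := by
  have h₁₂' := sub_ne_zero.2 h₁₂
  have hd₃ : d₃ ≠ 0 := by
    rintro rfl
    have hd : d₁ * (μ₁ - μ₂) = 0 := by linear_combination hd₁ - μ₂ * hd₀
    obtain rfl := (mul_eq_zero.1 hd).resolve_right h₁₂'
    exact hd₂ (by linear_combination μ₂ ^ 2 * hd₀)
  set β := (E₁ - E₂) / (μ₁ - μ₂) with hβ
  have hE₂ : E₂ = E₁ - β * μ₁ + β * μ₂ := by rw [hβ]; field_simp; ring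
  refine ⟨E₁ - β * μ₁, β, by ring, hE₂, ?_⟩
  have h : d₃ * (E₃ - (E₁ - β * μ₁ + β * μ₃)) = 0 := by
    linear_combination hE - (E₁ - β * μ₁) * hd₀ - β * hd₁ - d₂ * hE₂
  exact sub_eq_zero.1 ((mul_eq_zero.1 h).resolve_left hd₃)

lemma IsRosierMode.mem_criticalN_of_vieta (hL : 0 < L) (hf : IsRosierMode lam L f)
    (hs : μ₁ + μ₂ + μ₃ = 0) (he : μ₁ * μ₂ + μ₁ * μ₃ + μ₂ * μ₃ = 1) (hp : μ₁ * μ₂ * μ₃ = -lam)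
    (h₁₂ : μ₁ ≠ μ₂) (h₁₃ : μ₁ ≠ μ₃) (h₂₃ : μ₂ ≠ μ₃) : L ∈ criticalN := by
  obtain ⟨r₁, r₂, r₃⟩ := cubic_roots_of_vieta hs he hp
  obtain ⟨c₁, c₂, c₃, hc⟩ := hf.kdv.exists_jet2_eqOn_expSum3 r₁ r₂ r₃ h₁₂ h₁₃ h₂₃
  have h0 := hc (left_mem_Icc.2 hL.le)
  have h1 := hc (right_mem_Icc.2 hL.le)
  simp only [jet2, deriv_expSum3, iteratedDeriv_two_expSum3, expSum3_zero, Prod.mk.injEq,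
    hf.apply_zero, hf.deriv_zero, hf.apply_right, hf.deriv_right] at h0 h1
  simp only [expSum3] at h1
  obtain ⟨α, β, hE₁, hE₂, hE₃⟩ := exists_affine_of_orthogonal h₁₂ h0.1.symm h0.2.1.symm
    (h0.2.2 ▸ hf.iteratedDeriv_two_zero_ne) h1.1.symm
  have hβ : β * iteratedDeriv 2 f 0 = 0 := by
    rw [hE₁, hE₂, hE₃] at h1
    linear_combination β * h0.2.2 + α * h0.2.1 - h1.2.1
  obtain rfl := (mul_eq_zero.1 hβ).resolve_right hf.iteratedDeriv_two_zero_ne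
  exact mem_criticalN_of_cexp_eq hL hs he h₁₂ h₁₃ h₂₃ (by rw [hE₁, hE₂]; ring)
    (by rw [hE₂, hE₃]; ring)

lemma IsRosierMode.false_of_double (hL : 0 < L) (hf : IsRosierMode lam L f)
    (hm : 3 * m ^ 2 + 1 = 0) (hlam : lam = 2 * m ^ 3) : False := by
  obtain ⟨c₁, c₂, c₃, hc⟩ := hf.kdv.exists_jet2_eqOn_expSumDouble hm hlam
  have h0 := hc (left_mem_Icc.2 hL.le)
  have h1 := hc (right_mem_Icc.2 hL.le)
  simp only [jet2, deriv_expSumDouble, iteratedDeriv_two_expSumDouble, expSumDouble_zero,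
    Prod.mk.injEq, hf.apply_zero, hf.deriv_zero, hf.apply_right, hf.deriv_right] at h0 h1
  simp only [expSumDouble] at h1
  set u := cexp (m * L)
  -- the conditions at `0` give `c = c₁ (1, -3m, -1)`, and then `f'(L) = L e^{mL} f''(0)` once
  -- `f(L) = 0` is used
  have key : (L : ℂ) * u * iteratedDeriv 2 f 0 = 0 := by
    linear_combination (L : ℂ) * u * h0.2.2 - h1.2.1 - 2 * m * h1.1
      + u * (1 + m * L) * h0.2.1 + (2 * m * u - 2 * m ^ 2 * L * u) * h0.1
  simp only [mul_eq_zero, ofReal_eq_zero, hL.ne', Complex.exp_ne_zero, u, false_or] at key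
  exact hf.iteratedDeriv_two_zero_ne key

theorem IsRosierMode.mem_criticalN (hL : 0 < L) (hf : IsRosierMode lam L f) : L ∈ criticalN := by
  rcases exists_distinct_vieta_or_double lam with
    ⟨μ₁, μ₂, μ₃, hs, he, hp, h₁₂, h₁₃, h₂₃⟩ | ⟨m, hm, hlam⟩
  · exact hf.mem_criticalN_of_vieta hL hs he hp h₁₂ h₁₃ h₂₃
  · exact (hf.false_of_double hL hm hlam).elim

lemma isRosierMode_expSum3 (hs : μ₁ + μ₂ + μ₃ = 0) (he : μ₁ * μ₂ + μ₁ * μ₃ + μ₂ * μ₃ = 1)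
    (h₁₂ : μ₁ ≠ μ₂) (h₁₃ : μ₁ ≠ μ₃) (h₂₃ : μ₂ ≠ μ₃)
    (hE₁₂ : cexp (μ₁ * L) = cexp (μ₂ * L)) (hE₂₃ : cexp (μ₂ * L) = cexp (μ₃ * L)) :
    IsRosierMode (-(μ₁ * μ₂ * μ₃)) L (expSum3 (μ₂ - μ₃) (μ₃ - μ₁) (μ₁ - μ₂) μ₁ μ₂ μ₃) := by
  obtain ⟨r₁, r₂, r₃⟩ := cubic_roots_of_vieta hs he (neg_neg _).symm
  refine ⟨kdvSpectralODE_expSum3 r₁ r₂ r₃, ?_, ?_, ?_, ?_, ?_⟩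
  · rw [expSum3_zero]; ring
  · rw [deriv_expSum3, expSum3_zero]; ring
  · rw [iteratedDeriv_two_expSum3, expSum3_zero]
    have := mul_ne_zero (mul_ne_zero (sub_ne_zero.2 h₁₂) (sub_ne_zero.2 h₁₃)) (sub_ne_zero.2 h₂₃)
    intro h; apply this; linear_combination h
  · simp only [expSum3, hE₁₂, hE₂₃]; ring
  · simp only [deriv_expSum3, expSum3, hE₁₂, hE₂₃]; ring

lemma exists_isRosierMode_of_mem_criticalN (hL : 0 < L) (h : L ∈ criticalN) :
    ∃ lam f, IsRosierMode lam L f := by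
  obtain ⟨k, l, hk, hl, hkl⟩ := (mem_criticalN_iff_sq hL).1 h
  have hC : (3 * L ^ 2 : ℂ) = 4 * Real.pi ^ 2 * (k ^ 2 + k * l + l ^ 2) := by exact_mod_cast hkl
  have hL₀ : (L : ℂ) ≠ 0 := ofReal_ne_zero.2 hL.ne'
  have hk₀ : (k : ℂ) ≠ 0 := Nat.cast_ne_zero.2 hk.ne'
  have hl₀ : (l : ℂ) ≠ 0 := Nat.cast_ne_zero.2 hl.ne'
  have hkl₀ : (k + l : ℂ) ≠ 0 := by exact_mod_cast (by omega : k + l ≠ 0)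
  set τ : ℂ := 2 * Real.pi * I / (3 * L) with hτ
  have hτL : τ * L = 2 * Real.pi * I / 3 := by rw [hτ]; field_simp
  have hτ₀ : τ ≠ 0 := by
    rw [hτ]; exact div_ne_zero (by simp [Real.pi_ne_zero]) (by simpa using hL₀)
  refine ⟨_, _, isRosierMode_expSum3 (μ₁ := τ * (2 * k + l)) (μ₂ := τ * (l - k))
    (μ₃ := -τ * (k + 2 * l)) (L := L) (by ring) ?_ ?_ ?_ ?_ ?_ ?_⟩
  · rw [hτ]; field_simp
    linear_combination (-12 * Real.pi ^ 2 * (k ^ 2 + k * l + l ^ 2)) * I_sq - 3 * hC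
  · intro h; apply mul_ne_zero hτ₀ hk₀; linear_combination h / 3
  · intro h; apply mul_ne_zero hτ₀ hkl₀; linear_combination h / 3
  · intro h; apply mul_ne_zero hτ₀ hl₀; linear_combination h / 3
  · exact exp_eq_exp_iff_exists_int.2 ⟨k, by push_cast; linear_combination 3 * k * hτL⟩
  · exact exp_eq_exp_iff_exists_int.2 ⟨l, by push_cast; linear_combination 3 * l * hτL⟩

theorem mem_criticalN_iff_exists_isRosierMode (hL : 0 < L) :
    L ∈ criticalN ↔ ∃ lam f, IsRosierMode lam L f :=
  ⟨exists_isRosierMode_of_mem_criticalN hL, fun ⟨_, _, hf⟩ => hf.mem_criticalN hL⟩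

lemma isRosierMode_sub (hf : KdVSpectralODE lam L f) (hg : KdVSpectralODE lam L g)
    (h0 : f 0 = g 0) (h0' : deriv f 0 = deriv g 0)
    (h0'' : iteratedDeriv 2 f 0 ≠ iteratedDeriv 2 g 0) (hL : f L = g L)
    (hL' : deriv f L = deriv g L) : IsRosierMode lam L (f - g) := by
  have hjet := hf.jet2_sub hg
  simp only [jet2, Prod.mk_sub_mk, Prod.mk.injEq] at hjet
  exact ⟨hf.sub hg, by simp [h0], by simp [(hjet 0).2.1, h0'],
    by simpa [(hjet 0).2.2, sub_eq_zero] using h0'', by simp [hL], by simp [(hjet L).2.1, hL']⟩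

lemma apply_zero_eq_zero_of_clamped_of_vieta (hL : 0 < L) (hψ : KdVSpectralODE lam L ψ)
    (hD : KdVSpectralODE lam L D) (hψ0' : deriv ψ 0 = 0) (hψ0'' : iteratedDeriv 2 ψ 0 ≠ 0)
    (hψL : ψ L = 0) (hψL' : deriv ψ L = 0) (hD0 : D 0 = 0) (hD0' : deriv D 0 = 0)
    (hD0'' : iteratedDeriv 2 D 0 ≠ 0) (hDL : D L = 0)
    (hs : μ₁ + μ₂ + μ₃ = 0) (he : μ₁ * μ₂ + μ₁ * μ₃ + μ₂ * μ₃ = 1) (hp : μ₁ * μ₂ * μ₃ = -lam)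
    (h₁₂ : μ₁ ≠ μ₂) (h₁₃ : μ₁ ≠ μ₃) (h₂₃ : μ₂ ≠ μ₃) : ψ 0 = 0 := by
  obtain ⟨r₁, r₂, r₃⟩ := cubic_roots_of_vieta hs he hp
  obtain ⟨C₁, C₂, C₃, hC⟩ := hψ.exists_jet2_eqOn_expSum3 r₁ r₂ r₃ h₁₂ h₁₃ h₂₃
  obtain ⟨d₁, d₂, d₃, hd⟩ := hD.exists_jet2_eqOn_expSum3 r₁ r₂ r₃ h₁₂ h₁₃ h₂₃
  have hC0 := hC (left_mem_Icc.2 hL.le)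
  have hCL := hC (right_mem_Icc.2 hL.le)
  have hd0 := hd (left_mem_Icc.2 hL.le)
  have hdL := hd (right_mem_Icc.2 hL.le)
  simp only [jet2, deriv_expSum3, iteratedDeriv_two_expSum3, expSum3_zero, Prod.mk.injEq,
    hψ0', hψL, hψL', hD0, hD0', hDL] at hC0 hCL hd0 hdL
  simp only [expSum3] at hCL hdL
  obtain ⟨α, β, hE₁, hE₂, hE₃⟩ := exists_affine_of_orthogonal h₁₂ hd0.1.symm hd0.2.1.symm
    (hd0.2.2 ▸ hD0'') hdL.1.symm
  rw [hE₁, hE₂, hE₃] at hCL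
  have hβ : β * iteratedDeriv 2 ψ 0 = 0 := by
    linear_combination β * hC0.2.2 + α * hC0.2.1 - hCL.2.1
  obtain rfl := (mul_eq_zero.1 hβ).resolve_right hψ0''
  have hα : α * ψ 0 = 0 := by linear_combination α * hC0.1 - hCL.1
  refine (mul_eq_zero.1 hα).resolve_left ?_
  simpa [hE₁] using Complex.exp_ne_zero (μ₁ * L)

lemma apply_zero_eq_zero_of_clamped_of_double (hL : 0 < L) (hψ : KdVSpectralODE lam L ψ)
    (hD : KdVSpectralODE lam L D) (hψ0' : deriv ψ 0 = 0) (hψL : ψ L = 0) (hψL' : deriv ψ L = 0)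
    (hD0 : D 0 = 0) (hD0' : deriv D 0 = 0) (hD0'' : iteratedDeriv 2 D 0 ≠ 0) (hDL : D L = 0)
    (hm : 3 * m ^ 2 + 1 = 0) (hlam : lam = 2 * m ^ 3) : ψ 0 = 0 := by
  obtain ⟨C₁, C₂, C₃, hC⟩ := hψ.exists_jet2_eqOn_expSumDouble hm hlam
  obtain ⟨d₁, d₂, d₃, hd⟩ := hD.exists_jet2_eqOn_expSumDouble hm hlam
  have hC0 := hC (left_mem_Icc.2 hL.le)
  have hCL := hC (right_mem_Icc.2 hL.le)
  have hd0 := hd (left_mem_Icc.2 hL.le)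
  have hdL := hd (right_mem_Icc.2 hL.le)
  simp only [jet2, deriv_expSumDouble, iteratedDeriv_two_expSumDouble, expSumDouble_zero,
    Prod.mk.injEq, hψ0', hψL, hψL', hD0, hD0', hDL] at hC0 hCL hd0 hdL
  simp only [expSumDouble] at hCL hdL
  set u := cexp (m * L)
  set v := cexp (-2 * m * L)
  have hm₀ : m ≠ 0 := by rintro rfl; norm_num at hm
  have hu : u ≠ 0 := Complex.exp_ne_zero _
  have hL₀ : (L : ℂ) ≠ 0 := ofReal_ne_zero.2 hL.ne'
  have hmL : m * L ≠ 1 := by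
    -- `m² = -1/3` while `L` is real
    intro h
    have : ((L ^ 2 + 3 : ℝ) : ℂ) = 0 := by
      push_cast; linear_combination (-3 * m * L - 3) * h + L ^ 2 * hm
    have := ofReal_eq_zero.1 this
    nlinarith
  have hv : v = (1 - 3 * m * L) * u := by
    have h : iteratedDeriv 2 D 0 * (v - (1 - 3 * m * L) * u) = 0 := by
      linear_combination (v - (1 - 3 * m * L) * u) * hd0.2.2 - 9 * m ^ 2 * hdL.1
        - (8 * m ^ 2 * (v - (1 - 3 * m * L) * u) - 9 * m ^ 2 * v - 18 * m ^ 3 * L * u) * hd0.1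
        - (2 * m * (v - (1 - 3 * m * L) * u) - 9 * m ^ 2 * L * u) * hd0.2.1
    exact sub_eq_zero.1 ((mul_eq_zero.1 h).resolve_left hD0'')
  rw [hv] at hCL
  have hC₂ : C₂ = -6 * m * C₃ := by
    have h : m * L * u * (C₂ + 6 * m * C₃) = 0 := by linear_combination -hCL.2.1 + u * hC0.2.1
    linear_combination (mul_eq_zero.1 h).resolve_left (by simp [hm₀, hL₀, hu])
  have hC₁ : C₁ = 8 * C₃ := by
    have h : m * (C₁ - 8 * C₃) = 0 := by linear_combination -hC0.2.1 - hC₂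
    linear_combination (mul_eq_zero.1 h).resolve_left hm₀
  have hC₃ : 9 * u * (1 - m * L) * C₃ = 0 := by
    linear_combination -hCL.1 - L * u * hC₂ - u * hC₁
  have : C₃ = 0 := (mul_eq_zero.1 hC₃).resolve_left
    (by simp [hu, sub_eq_zero, Ne.symm hmL])
  rw [hC0.1, hC₁, this]; ring

lemma KdVSpectralODE.apply_zero_eq_zero_of_clamped (hL : 0 < L) (hψ : KdVSpectralODE lam L ψ)
    (hD : KdVSpectralODE lam L D) (hψ0' : deriv ψ 0 = 0) (hψ0'' : iteratedDeriv 2 ψ 0 ≠ 0)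
    (hψL : ψ L = 0) (hψL' : deriv ψ L = 0) (hD0 : D 0 = 0) (hD0' : deriv D 0 = 0)
    (hD0'' : iteratedDeriv 2 D 0 ≠ 0) (hDL : D L = 0) : ψ 0 = 0 := by
  rcases exists_distinct_vieta_or_double lam with
    ⟨μ₁, μ₂, μ₃, hs, he, hp, h₁₂, h₁₃, h₂₃⟩ | ⟨m, hm, hlam⟩
  · exact apply_zero_eq_zero_of_clamped_of_vieta hL hψ hD hψ0' hψ0'' hψL hψL' hD0 hD0' hD0'' hDL
      hs he hp h₁₂ h₁₃ h₂₃
  · exact apply_zero_eq_zero_of_clamped_of_double hL hψ hD hψ0' hψL hψL' hD0 hD0' hD0'' hDL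
      hm hlam

lemma KdVSpectralODE.apply_zero_eq_zero_of_jet2_eq {χ : ℝ → ℂ} (hL : 0 < L)
    (hψ : KdVSpectralODE lam L ψ) (hχ : KdVSpectralODE lam L χ) (h : jet2 ψ 0 = jet2 χ 0)
    (hψL : ψ L = 0) (hψL' : deriv ψ L = 0) (hχL'' : iteratedDeriv 2 χ L = 0) : ψ 0 = 0 := by
  have hL' := hψ.jet2_eqOn_of_eq_left hχ h (right_mem_Icc.2 hL.le)
  simp only [jet2, Prod.mk.injEq] at hL'
  have h0 := hψ.jet2_eqOn_of_eq_right kdvSpectralODE_zero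
    (by simp [jet2, hψL, hψL', hL'.2.2, hχL'']) (left_mem_Icc.2 hL.le)
  simpa [jet2] using congrArg Prod.fst h0

-- Eigenfunctions on a star-shaped network of `N` edges joined at `x = 0`; the last edge carries
-- `φ''(L) = 0` in place of `φ'(L) = 0`.
theorem mem_criticalN_of_star {N : ℕ} (hN : 2 ≤ N) (hL : 0 < L) {a : ℂ} {φ : Fin N → ℝ → ℂ}
    (last : Fin N) (hlast : (last : ℕ) = N - 1)
    (hode : ∀ j, KdVSpectralODE lam L (φ j)) (hsame : ∀ j, φ j 0 = a)
    (hsum : ∑ j, iteratedDeriv 2 (φ j) 0 = 0) (hbL : ∀ j, φ j L = 0)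
    (hd0 : ∀ j, deriv (φ j) 0 = 0) (hdL : ∀ j : Fin N, (j : ℕ) < N - 1 → deriv (φ j) L = 0)
    (h2L : iteratedDeriv 2 (φ last) L = 0) (hnt : ∃ j, ∃ x ∈ Icc (0 : ℝ) L, φ j x ≠ 0) :
    L ∈ criticalN := by
  have interior {j : Fin N} (hj : j ≠ last) : (j : ℕ) < N - 1 := by
    have := Fin.val_ne_of_ne hj; omega
  set i₀ : Fin N := ⟨0, by omega⟩
  have hi₀ : i₀ ≠ last := Fin.ne_of_val_ne (by rw [hlast]; simp only [i₀]; omega)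
  set b := iteratedDeriv 2 (φ i₀) 0
  by_cases hA : ∃ j ≠ last, iteratedDeriv 2 (φ j) 0 ≠ b
  · obtain ⟨j, hj, hjb⟩ := hA
    exact (isRosierMode_sub (hode j) (hode i₀) (by rw [hsame, hsame]) (by rw [hd0, hd0]) hjb
      (by rw [hbL, hbL]) (by rw [hdL j (interior hj), hdL i₀ (interior hi₀)])).mem_criticalN hL
  push Not at hA
  have hχ : iteratedDeriv 2 (φ last) 0 = -((N - 1 : ℕ) * b) := by
    rw [Fintype.sum_eq_card_sub_one_nsmul_add last hA, Fintype.card_fin, nsmul_eq_mul] at hsum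
    linear_combination hsum
  have ha : a = 0 := by
    rw [← hsame i₀]
    by_cases hb : b = 0
    · exact (hode i₀).apply_zero_eq_zero_of_jet2_eq hL (hode last)
        (by simp [jet2, hsame, hd0, hχ, hb, b]) (hbL i₀) (hdL i₀ (interior hi₀)) h2L
    have hjet := (hode i₀).jet2_sub (hode last) 0
    simp only [jet2, Prod.mk_sub_mk, Prod.mk.injEq] at hjet
    refine (hode i₀).apply_zero_eq_zero_of_clamped hL ((hode i₀).sub (hode last)) (hd0 i₀) hb
      (hbL i₀) (hdL i₀ (interior hi₀)) (by simp [hsame]) (by simp [hjet.2.1, hd0]) ?_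
      (by simp [hbL])
    rw [hjet.2.2, hχ]
    intro h
    exact mul_ne_zero (Nat.cast_add_one_ne_zero (N - 1)) hb (by linear_combination h)
  by_cases hb : b = 0
  · obtain ⟨j, x, hx, hjx⟩ := hnt
    refine (hjx ((hode j).eqOn_zero_of_jet2_eq_zero ?_ hx)).elim
    by_cases hj : j = last
    · simp [jet2, hj, hsame, hd0, hχ, hb, ha]
    · simp [jet2, hsame, hd0, hA j hj, hb, ha]
  exact IsRosierMode.mem_criticalN hL ⟨hode i₀, by simp [hsame, ha], hd0 i₀, hb, hbL i₀,
    hdL i₀ (interior hi₀)⟩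

theorem exists_star_of_isRosierMode {N : ℕ} {i₀ i₁ : Fin N} (h₀₁ : i₀ ≠ i₁) (hL : 0 < L)
    {G : ℝ → ℂ} (hG : IsRosierMode lam L G) :
    ∃ φ : Fin N → ℝ → ℂ,
      (∀ j, KdVSpectralODE lam L (φ j)) ∧
      (∀ j, φ j 0 = 0) ∧
      (∑ j, iteratedDeriv 2 (φ j) 0) = 0 ∧
      (∀ j, φ j L = 0) ∧
      (∀ j, deriv (φ j) 0 = 0) ∧
      (∀ j, deriv (φ j) L = 0) ∧
      (∀ j, j ≠ i₀ → j ≠ i₁ → iteratedDeriv 2 (φ j) L = 0) ∧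
      (∃ j, ∃ x ∈ Icc (0 : ℝ) L, φ j x ≠ 0) := by
  set e : Fin N → ℂ := Pi.single i₀ 1 - Pi.single i₁ 1
  refine ⟨fun j => e j • G, fun j => hG.kdv.const_smul _, ?_, ?_, ?_, ?_, ?_, ?_, ?_⟩
  · simp [hG.apply_zero]
  · simp only [iteratedDeriv_const_smul_field, smul_eq_mul, ← Finset.sum_mul]
    simp [e, Finset.sum_sub_distrib]
  · simp [hG.apply_right]
  · simp [deriv_const_smul_field, hG.deriv_zero]
  · simp [deriv_const_smul_field, hG.deriv_right]
  · intro j hj₀ hj₁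
    simp [e, hj₀, hj₁]
  · refine ⟨i₀, ?_⟩
    by_contra! h
    apply hG.iteratedDeriv_two_zero_ne
    have := hG.kdv.jet2_eq_zero_of_eqOn_zero hL (fun x hx => by simpa [e, h₀₁] using h x hx)
    simp only [jet2, Prod.mk_eq_zero] at this
    exact this.2.2

end

theorem stmt6 (N : ℕ) (hN : 3 ≤ N) (L : ℝ) (hL : 0 < L) :
    (∃ lam : ℂ, ∃ φ : Fin N → ℝ → ℂ,
      (∀ j, KdVSpectralODE lam L (φ j)) ∧
      (∀ j, φ j 0 = φ ⟨0, by omega⟩ 0) ∧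
      (∑ j, iteratedDeriv 2 (φ j) 0) = 0 ∧
      (∀ j, φ j L = 0) ∧
      (∀ j, deriv (φ j) 0 = 0) ∧
      (∀ j : Fin N, (j : ℕ) < N - 1 → deriv (φ j) L = 0) ∧
      iteratedDeriv 2 (φ ⟨N - 1, by omega⟩) L = 0 ∧
      (∃ j, ∃ x ∈ Set.Icc (0 : ℝ) L, φ j x ≠ 0)) ↔
    L ∈ criticalN := by
  constructor
  · rintro ⟨lam, φ, hode, hsame, hsum, hbL, hd0, hdL, h2L, hnt⟩
    exact mem_criticalN_of_star (by omega) hL _ rfl hode hsame hsum hbL hd0 hdL h2L hnt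
  · intro h
    obtain ⟨lam, G, hG⟩ := (mem_criticalN_iff_exists_isRosierMode hL).1 h
    have h₀₁ : (⟨0, by omega⟩ : Fin N) ≠ ⟨1, by omega⟩ := by simp
    obtain ⟨φ, hode, h0, hsum, hbL, hd0, hdL, h2L, hnt⟩ := exists_star_of_isRosierMode h₀₁ hL hG
    have hlast : iteratedDeriv 2 (φ ⟨N - 1, by omega⟩) L = 0 :=
      h2L _ (by simp only [ne_eq, Fin.mk.injEq]; omega) (by simp only [ne_eq, Fin.mk.injEq]; omega)
    exact ⟨lam, φ, hode, fun j => by rw [h0, h0], hsum, hbL, hd0, fun j _ => hdL j, hlast, hnt⟩
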